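/- arXiv:2107.00991 — 2 statements merged into one kernel-verified Lean document; each statement's English description precedes it below -/
import Mathlib

section
/- For every n ≥ 0 there exists a surjective kG-module homomorphism from the free module (kG)^{n+1} onto V_{2n+1} whose kernel is isomorphic as a kG-module to V_{2n+3}. -/
/-!
`π : (kG)^{n+1} → V_{2n+1}` sends the free generator `e_i` to `a_i`; it is onto since
`b_{i+1} = X a_{i+1}`. In characteristic 2 the elements `X e_0`, `Y e_m + X e_{m+1}` (`m < n`),
`Y e_n` and `XY e_m` (`m ≤ n`) of `(kG)^{n+1}` satisfy the defining relations of `V_{2n+3}`,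
so they are the images of its basis under a `kG`-map `ι : V_{2n+3} → (kG)^{n+1}`. Reading
coefficients off the values at `σ`, `τ` and `στ` gives a `k`-linear left inverse of `ι`, and
`π ∘ ι = 0` because `X a_0 = Y a_n = XY a_m = 0` and `X a_{m+1} = Y a_m`. Finally
`dim ker π = 4(n+1) - (2n+1) = 2n+3 = dim V_{2n+3}`, so `ι` maps onto `ker π`.
-/

/-- The Klein four-group `G = C₂ × C₂`. -/
abbrev K4 : Type := Multiplicative (ZMod 2 × ZMod 2)

/-- The generator `σ` of the Klein four-group. -/
def sg : K4 := Multiplicative.ofAdd ((1 : ZMod 2), (0 : ZMod 2))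

/-- The generator `τ` of the Klein four-group. -/
def tg : K4 := Multiplicative.ofAdd ((0 : ZMod 2), (1 : ZMod 2))

/-- The subgroup `H₁ = ⟨σ⟩`. -/
def H1 : Subgroup K4 := Subgroup.zpowers sg

/-- The subgroup `H₂ = ⟨τ⟩`. -/
def H2 : Subgroup K4 := Subgroup.zpowers tg

/-- The subgroup `H₃ = ⟨στ⟩`. -/
def H3 : Subgroup K4 := Subgroup.zpowers (sg * tg)

/-- `V` carries the structure of the module `V_{2n+1}`: the basis vector `B (Sum.inl j)`
is `a_j` (for `0 ≤ j ≤ n`) and `B (Sum.inr i)` is `b_{i+1}` (for `0 ≤ i ≤ n-1`), with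
`X·aᵢ = bᵢ` (`1 ≤ i ≤ n`), `Y·aᵢ = b_{i+1}` (`0 ≤ i ≤ n-1`), `X·a₀ = Y·aₙ = 0` and
`X·bⱼ = Y·bⱼ = 0`, i.e. (with `σ = 1 + X`, `τ = 1 + Y`) `σ·aᵢ = aᵢ + bᵢ` for `i ≥ 1`,
`σ·a₀ = a₀`, `τ·aᵢ = aᵢ + b_{i+1}` for `i ≤ n-1`, `τ·aₙ = aₙ`, and `σ, τ` fix the `bⱼ`. -/
def IsVpos (k : Type) [Field k] (n : ℕ) (V : Type) [AddCommGroup V] [Module k V]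
    [DistribMulAction K4 V] (B : Module.Basis (Fin (n + 1) ⊕ Fin n) k V) : Prop :=
  (sg • B (Sum.inl 0) = B (Sum.inl 0)) ∧
  (∀ i : Fin n, sg • B (Sum.inl i.succ) = B (Sum.inl i.succ) + B (Sum.inr i)) ∧
  (∀ i : Fin n, tg • B (Sum.inl i.castSucc) = B (Sum.inl i.castSucc) + B (Sum.inr i)) ∧
  (tg • B (Sum.inl (Fin.last n)) = B (Sum.inl (Fin.last n))) ∧
  (∀ j : Fin n, sg • B (Sum.inr j) = B (Sum.inr j)) ∧
  (∀ j : Fin n, tg • B (Sum.inr j) = B (Sum.inr j))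

open Finset Function

section FreeModule

variable (k : Type*) {G ι V : Type*} [CommSemiring k] [Group G]

/-- Left translation by `g` on `(kG)^ι`, where an element of `kG` is a function `G → k`. -/
def regularTranslate (g : G) : (ι → G → k) →ₗ[k] (ι → G → k) where
  toFun F i x := F i (g⁻¹ * x)
  map_add' _ _ := rfl
  map_smul' _ _ := rfl

theorem regularTranslate_mul (g h : G) (F : ι → G → k) :
    regularTranslate k (g * h) F = regularTranslate k g (regularTranslate k h F) := by
  ext i x
  simp [regularTranslate, mul_assoc]

variable [Fintype G] [AddCommMonoid V] [Module k V] [DistribMulAction G V]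

def orbitLift (v : V) : (G → k) →ₗ[k] V := Fintype.linearCombination k fun g => g • v

theorem orbitLift_apply (v : V) (f : G → k) : orbitLift k v f = ∑ g, f g • g • v := rfl

theorem orbitLift_zero : orbitLift k (0 : V) = (0 : (G → k) →ₗ[k] V) := by
  ext f
  simp [orbitLift_apply]

theorem orbitLift_single [DecidableEq G] (v : V) (g : G) :
    orbitLift k v (Pi.single g 1) = g • v := by
  simp [orbitLift_apply, Pi.single_apply, ite_smul]

theorem orbitLift_translate [SMulCommClass G k V] (v : V) (g : G) (f : G → k) :
    orbitLift k v (fun x => f (g⁻¹ * x)) = g • orbitLift k v f := by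
  rw [orbitLift_apply, orbitLift_apply, smul_sum, ← Equiv.sum_comp (Equiv.mulLeft g)]
  simp [mul_smul, smul_comm g (f _)]

variable [Fintype ι]

def freeLift (v : ι → V) : (ι → G → k) →ₗ[k] V :=
  ∑ i, (orbitLift k (v i)).comp (LinearMap.proj i)

theorem freeLift_apply (v : ι → V) (F : ι → G → k) :
    freeLift k v F = ∑ i, orbitLift k (v i) (F i) := by
  simp [freeLift]

theorem freeLift_translate [SMulCommClass G k V] (v : ι → V) (g : G) (F : ι → G → k) :
    freeLift k v (regularTranslate k g F) = g • freeLift k v F := by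
  simp only [freeLift_apply, smul_sum, ← orbitLift_translate]
  rfl

end FreeModule

section NatSingle

variable {R A M : Type*} [CommSemiring R] [AddCommMonoid A] [Module R A]
  [AddCommMonoid M] [Module R M]

/-- `Pi.single` with a natural-number index, which is `0` when the index is out of range. -/
def natSingle (N m : ℕ) (a : A) : Fin N → A := fun i => if (i : ℕ) = m then a else 0

theorem natSingle_add (N m : ℕ) (a b : A) :
    natSingle N m (a + b) = natSingle N m a + natSingle N m b := by
  ext i
  by_cases h : (i : ℕ) = m <;> simp [natSingle, h]

theorem natSingle_of_le {N m : ℕ} (h : N ≤ m) (a : A) : natSingle N m a = 0 := by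
  ext i
  simp [natSingle, show (i : ℕ) ≠ m by omega]

theorem sum_apply_natSingle {N : ℕ} (φ : ℕ → A →ₗ[R] M) (hφ : ∀ m, N ≤ m → φ m = 0)
    (m : ℕ) (a : A) : ∑ i : Fin N, φ i (natSingle N m a i) = φ m a := by
  rcases lt_or_ge m N with hm | hm
  · rw [Fintype.sum_eq_single ⟨m, hm⟩ fun i hi => ?_]
    · simp [natSingle]
    · simp [natSingle, show (i : ℕ) ≠ m from fun h => hi (Fin.ext h)]
  · simp [natSingle_of_le hm, hφ m hm]

theorem regularTranslate_natSingle {G : Type*} [Group G] (g : G) (N m : ℕ) (f : G → R) :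
    regularTranslate R g (natSingle N m f) = natSingle N m fun x => f (g⁻¹ * x) := by
  ext i x
  by_cases h : (i : ℕ) = m <;> simp [regularTranslate, natSingle, h]

end NatSingle

theorem LinearMap.range_eq_ker_of_finrank_add_eq {K U M V : Type*} [Field K]
    [AddCommGroup U] [Module K U] [AddCommGroup M] [Module K M] [FiniteDimensional K M]
    [AddCommGroup V] [Module K V] {i : U →ₗ[K] M} {p : M →ₗ[K] V}
    (hi : Injective i) (hp : Surjective p) (hpi : p ∘ₗ i = 0)
    (hdim : Module.finrank K U + Module.finrank K V = Module.finrank K M) :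
    range i = ker p := by
  refine Submodule.eq_of_le_of_finrank_eq (range_le_ker_iff.mpr hpi) ?_
  have := p.finrank_range_add_finrank_ker
  rw [range_eq_top.mpr hp, finrank_top] at this
  rw [finrank_range_of_inj hi]
  omega

theorem two_smul_eq_zero_of_charTwo {R M : Type*} [Ring R] [CharP R 2] [AddCommGroup M]
    [Module R M] (x : M) : (2 : R) • x = 0 := by
  rw [CharTwo.two_eq_zero, zero_smul]

theorem K4_eq_cases (x : K4) : x = 1 ∨ x = sg ∨ x = tg ∨ x = sg * tg := by
  revert x; decide

theorem sum_univ_K4 {M : Type*} [AddCommMonoid M] (f : K4 → M) :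
    ∑ g, f g = f 1 + f sg + f tg + f (sg * tg) := by
  rw [show (univ : Finset K4) = {1, sg, tg, sg * tg} by decide, sum_insert (by decide),
    sum_insert (by decide), sum_insert (by decide), sum_singleton]
  abel

section GroupAlgebra

variable (k : Type*) [CommRing k]

/- Elements of `kG` are functions `K4 → k`. In characteristic 2, `X = σ + 1` and `Y = τ + 1`,
and `XY = 1 + σ + τ + στ` is the constant function `1`. -/
def elemX : K4 → k := fun x => if x = 1 ∨ x = sg then 1 else 0

def elemY : K4 → k := fun x => if x = 1 ∨ x = tg then 1 else 0

theorem elemX_translate_sg : (fun x => elemX k (sg⁻¹ * x)) = elemX k := by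
  ext x
  rcases K4_eq_cases x with rfl | rfl | rfl | rfl <;> simp +decide [elemX]

theorem elemY_translate_tg : (fun x => elemY k (tg⁻¹ * x)) = elemY k := by
  ext x
  rcases K4_eq_cases x with rfl | rfl | rfl | rfl <;> simp +decide [elemY]

variable {k} {V : Type*} [AddCommGroup V] [Module k V] [DistribMulAction K4 V]

theorem orbitLift_elemX (v : V) : orbitLift k v (elemX k) = v + sg • v := by
  simp +decide [orbitLift_apply, sum_univ_K4, elemX]

theorem orbitLift_elemY (v : V) : orbitLift k v (elemY k) = v + tg • v := by
  simp +decide [orbitLift_apply, sum_univ_K4, elemY]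

theorem orbitLift_one (v : V) :
    orbitLift k v (1 : K4 → k) = v + sg • v + tg • v + (sg * tg) • v := by
  simp [orbitLift_apply, sum_univ_K4]

variable (k) [CharP k 2]

theorem elemY_translate_sg : (fun x => elemY k (sg⁻¹ * x)) = elemY k + 1 := by
  ext x
  rcases K4_eq_cases x with rfl | rfl | rfl | rfl <;>
    simp +decide [elemY, CharTwo.add_self_eq_zero]

theorem elemX_translate_tg : (fun x => elemX k (tg⁻¹ * x)) = elemX k + 1 := by
  ext x
  rcases K4_eq_cases x with rfl | rfl | rfl | rfl <;>
    simp +decide [elemX, CharTwo.add_self_eq_zero]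

end GroupAlgebra

section VModule

variable {k : Type} [Field k] {n : ℕ} {V : Type} [AddCommGroup V] [Module k V]
  {B : Module.Basis (Fin (n + 1) ⊕ Fin n) k V}

/-- `a_m`, extended by `0` for `m > n`. -/
noncomputable def aVec (B : Module.Basis (Fin (n + 1) ⊕ Fin n) k V) (m : ℕ) : V :=
  if h : m < n + 1 then B (.inl ⟨m, h⟩) else 0

/-- `b_{m+1}` (note the shift), extended by `0` for `m ≥ n`. -/
noncomputable def bVec (B : Module.Basis (Fin (n + 1) ⊕ Fin n) k V) (m : ℕ) : V :=
  if h : m < n then B (.inr ⟨m, h⟩) else 0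

theorem aVec_of_lt {m : ℕ} (h : m < n + 1) : aVec B m = B (.inl ⟨m, h⟩) := dif_pos h

theorem bVec_of_lt {m : ℕ} (h : m < n) : bVec B m = B (.inr ⟨m, h⟩) := dif_pos h

theorem aVec_of_le {m : ℕ} (h : n + 1 ≤ m) : aVec B m = 0 := dif_neg (by omega)

theorem bVec_of_le {m : ℕ} (h : n ≤ m) : bVec B m = 0 := dif_neg (by omega)

namespace IsVpos

variable [DistribMulAction K4 V] (hV : IsVpos k n V B)
include hV

theorem sg_smul_aVec_zero : sg • aVec B 0 = aVec B 0 := by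
  rw [aVec_of_lt (Nat.succ_pos n)]
  exact hV.1

theorem sg_smul_aVec_succ (m : ℕ) : sg • aVec B (m + 1) = aVec B (m + 1) + bVec B m := by
  rcases lt_or_ge m n with h | h
  · rw [aVec_of_lt (by omega), bVec_of_lt h]
    exact hV.2.1 ⟨m, h⟩
  · simp [aVec_of_le (show n + 1 ≤ m + 1 by omega), bVec_of_le h]

theorem tg_smul_aVec (m : ℕ) : tg • aVec B m = aVec B m + bVec B m := by
  rcases lt_trichotomy m n with h | rfl | h
  · rw [aVec_of_lt (by omega), bVec_of_lt h]
    exact hV.2.2.1 ⟨m, h⟩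
  · rw [aVec_of_lt (by omega), bVec_of_le le_rfl, add_zero]
    exact hV.2.2.2.1
  · simp [aVec_of_le (show n + 1 ≤ m by omega), bVec_of_le h.le]

theorem sg_smul_bVec (m : ℕ) : sg • bVec B m = bVec B m := by
  rcases lt_or_ge m n with h | h
  · rw [bVec_of_lt h]
    exact hV.2.2.2.2.1 ⟨m, h⟩
  · simp [bVec_of_le h]

theorem tg_smul_bVec (m : ℕ) : tg • bVec B m = bVec B m := by
  rcases lt_or_ge m n with h | h
  · rw [bVec_of_lt h]
    exact hV.2.2.2.2.2 ⟨m, h⟩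
  · simp [bVec_of_le h]

end IsVpos

end VModule

section KernelGenerators

variable (k : Type*) [CommRing k] (n : ℕ)

/-- The images `X e₀`, `Y e_m + X e_{m+1}` of the `a`-basis vectors of `V_{2n+3}` in
`(kG)^{n+1}`, where `e_m` is the `m`-th free generator. -/
def kerA : ℕ → Fin (n + 1) → K4 → k
  | 0 => natSingle (n + 1) 0 (elemX k)
  | m + 1 => natSingle (n + 1) m (elemY k) + natSingle (n + 1) (m + 1) (elemX k)

/-- The image `XY e_m` of the basis vector `b_{m+1}` of `V_{2n+3}` in `(kG)^{n+1}`. -/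
def kerB (m : ℕ) : Fin (n + 1) → K4 → k := natSingle (n + 1) m (1 : K4 → k)

variable {k n}

theorem kerA_of_le {m : ℕ} (h : n + 2 ≤ m) : kerA k n m = 0 := by
  obtain ⟨m, rfl⟩ : ∃ m', m = m' + 1 := ⟨m - 1, by omega⟩
  simp [kerA, natSingle_of_le (show n + 1 ≤ m by omega),
    natSingle_of_le (show n + 1 ≤ m + 1 by omega)]

theorem kerB_of_le {m : ℕ} (h : n + 1 ≤ m) : kerB k n m = 0 := natSingle_of_le h 1

theorem regularTranslate_kerB (g : K4) (m : ℕ) :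
    regularTranslate k g (kerB k n m) = kerB k n m :=
  regularTranslate_natSingle g _ m (1 : K4 → k)

theorem regularTranslate_sg_kerA_zero : regularTranslate k sg (kerA k n 0) = kerA k n 0 := by
  rw [kerA, regularTranslate_natSingle, elemX_translate_sg]

variable [CharP k 2]

theorem regularTranslate_sg_kerA_succ (m : ℕ) :
    regularTranslate k sg (kerA k n (m + 1)) = kerA k n (m + 1) + kerB k n m := by
  rw [kerA, map_add, regularTranslate_natSingle, regularTranslate_natSingle, elemX_translate_sg,
    elemY_translate_sg, natSingle_add, kerB]
  abel

theorem regularTranslate_tg_kerA (m : ℕ) :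
    regularTranslate k tg (kerA k n m) = kerA k n m + kerB k n m := by
  cases m with
  | zero => rw [kerA, regularTranslate_natSingle, elemX_translate_tg, natSingle_add, kerB]
  | succ m =>
    rw [kerA, map_add, regularTranslate_natSingle, regularTranslate_natSingle, elemX_translate_tg,
      elemY_translate_tg, natSingle_add, kerB]
    abel

end KernelGenerators

section Projection

variable {k : Type} [Field k] {n : ℕ} {V : Type} [AddCommGroup V] [Module k V]
  [DistribMulAction K4 V] {B : Module.Basis (Fin (n + 1) ⊕ Fin n) k V}

noncomputable def freeCover (B : Module.Basis (Fin (n + 1) ⊕ Fin n) k V) :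
    (Fin (n + 1) → K4 → k) →ₗ[k] V :=
  freeLift k fun i : Fin (n + 1) => aVec B i

theorem freeCover_natSingle (m : ℕ) (f : K4 → k) :
    freeCover B (natSingle (n + 1) m f) = orbitLift k (aVec B m) f := by
  rw [freeCover, freeLift_apply]
  refine sum_apply_natSingle (fun m => orbitLift k (aVec B m)) (fun m hm => ?_) m f
  rw [aVec_of_le hm, orbitLift_zero]

namespace IsVpos

variable (hV : IsVpos k n V B)
include hV

theorem freeCover_surjective : Surjective (freeCover B) := by
  have hmem (m : ℕ) (g : K4) : g • aVec B m ∈ LinearMap.range (freeCover B) :=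
    ⟨natSingle (n + 1) m (Pi.single g (1 : k)), by rw [freeCover_natSingle, orbitLift_single]⟩
  rw [← LinearMap.range_eq_top, eq_top_iff, ← B.span_eq, Submodule.span_le]
  rintro _ ⟨⟨m, hm⟩ | ⟨m, hm⟩, rfl⟩
  · simpa [← aVec_of_lt hm] using hmem m 1
  · have hb : B (.inr ⟨m, hm⟩) = sg • aVec B (m + 1) - aVec B (m + 1) := by
      rw [← bVec_of_lt hm, hV.sg_smul_aVec_succ, add_sub_cancel_left]
    rw [hb]
    exact sub_mem (hmem _ _) (by simpa using hmem (m + 1) 1)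

variable [CharP k 2]

theorem freeCover_kerA (m : ℕ) : freeCover B (kerA k n m) = 0 := by
  cases m with
  | zero =>
    rw [kerA, freeCover_natSingle, orbitLift_elemX, hV.sg_smul_aVec_zero, ← two_smul k,
      two_smul_eq_zero_of_charTwo]
  | succ m =>
    rw [kerA, map_add, freeCover_natSingle, freeCover_natSingle, orbitLift_elemX,
      orbitLift_elemY, hV.sg_smul_aVec_succ, hV.tg_smul_aVec]
    calc _ = (2 : k) • (aVec B m + aVec B (m + 1) + bVec B m) := by rw [two_smul]; abel
      _ = 0 := two_smul_eq_zero_of_charTwo _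

theorem freeCover_kerB (m : ℕ) : freeCover B (kerB k n m) = 0 := by
  rw [kerB, freeCover_natSingle, orbitLift_one, mul_smul, hV.tg_smul_aVec, smul_add,
    hV.sg_smul_bVec]
  calc _ = (2 : k) • (aVec B m + sg • aVec B m + bVec B m) := by rw [two_smul]; abel
    _ = 0 := two_smul_eq_zero_of_charTwo _

end IsVpos

end Projection

theorem Module.Basis.apply_smul_of_basis {ι R G M N : Type*} [Semiring R]
    [AddCommMonoid M] [Module R M] [DistribSMul G M] [SMulCommClass G R M]
    [AddCommMonoid N] [Module R N] (b : Module.Basis ι R M) (f : M →ₗ[R] N) (S : N →ₗ[R] N)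
    (g : G) (h : ∀ i, f (g • b i) = S (f (b i))) (x : M) : f (g • x) = S (f x) :=
  LinearMap.congr_fun (b.ext (f₁ := f ∘ₗ DistribSMul.toLinearMap R M g) (f₂ := S ∘ₗ f) h) x

section Embedding

variable {k : Type} [Field k] {n : ℕ} {W : Type} [AddCommGroup W] [Module k W]
  {B : Module.Basis (Fin (n + 2) ⊕ Fin (n + 1)) k W}

noncomputable def kerEmbedding (B : Module.Basis (Fin (n + 2) ⊕ Fin (n + 1)) k W) :
    W →ₗ[k] (Fin (n + 1) → K4 → k) :=
  B.constr k (Sum.elim (fun j => kerA k n j) (fun j => kerB k n j))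

theorem kerEmbedding_aVec (m : ℕ) : kerEmbedding B (aVec B m) = kerA k n m := by
  rcases lt_or_ge m (n + 2) with h | h
  · rw [aVec_of_lt h, kerEmbedding, B.constr_basis]
    rfl
  · rw [aVec_of_le h, map_zero, kerA_of_le h]

theorem kerEmbedding_bVec (m : ℕ) : kerEmbedding B (bVec B m) = kerB k n m := by
  rcases lt_or_ge m (n + 1) with h | h
  · rw [bVec_of_lt h, kerEmbedding, B.constr_basis]
    rfl
  · rw [bVec_of_le h, map_zero, kerB_of_le h]

/- The `m`-th coordinate of `kerEmbedding B (∑ c_j a_j + ∑ d_j b_{j+1})` is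
`c_{m+1} Y + c_m X + d_m XY`, whose values at `σ`, `τ`, `στ` are `c_m + d_m`, `c_{m+1} + d_m`
and `d_m`. -/
noncomputable def kerRetractionTerm (B : Module.Basis (Fin (n + 2) ⊕ Fin (n + 1)) k W) (m : ℕ) :
    (K4 → k) →ₗ[k] W :=
  let ev (x : K4) : (K4 → k) →ₗ[k] k := LinearMap.proj x
  (ev sg + ev (sg * tg)).smulRight (if m = 0 then aVec B 0 else 0) +
    (ev tg + ev (sg * tg)).smulRight (aVec B (m + 1)) + (ev (sg * tg)).smulRight (bVec B m)

noncomputable def kerRetraction (B : Module.Basis (Fin (n + 2) ⊕ Fin (n + 1)) k W) :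
    (Fin (n + 1) → K4 → k) →ₗ[k] W :=
  ∑ i : Fin (n + 1), (kerRetractionTerm B i).comp (LinearMap.proj i)

theorem kerRetraction_natSingle (m : ℕ) (f : K4 → k) :
    kerRetraction B (natSingle (n + 1) m f) = kerRetractionTerm B m f := by
  rw [kerRetraction, LinearMap.sum_apply]
  refine sum_apply_natSingle (kerRetractionTerm B) (fun m hm => ?_) m f
  ext
  simp [kerRetractionTerm, show m ≠ 0 by omega, aVec_of_le (show n + 2 ≤ m + 1 by omega),
    bVec_of_le hm]

theorem kerRetraction_kerA (m : ℕ) : kerRetraction B (kerA k n m) = aVec B m := by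
  cases m with
  | zero => simp +decide [kerA, kerRetraction_natSingle, kerRetractionTerm, elemX]
  | succ m => simp +decide [kerA, kerRetraction_natSingle, kerRetractionTerm, elemX, elemY]

theorem kerRetraction_kerB [CharP k 2] (m : ℕ) : kerRetraction B (kerB k n m) = bVec B m := by
  simp [kerB, kerRetraction_natSingle, kerRetractionTerm, CharTwo.add_self_eq_zero]

theorem kerRetraction_kerEmbedding [CharP k 2] (w : W) :
    kerRetraction B (kerEmbedding B w) = w := by
  have : kerRetraction B ∘ₗ kerEmbedding B = LinearMap.id := by
    refine B.ext fun s => ?_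
    rcases s with ⟨m, hm⟩ | ⟨m, hm⟩
    · simp [← aVec_of_lt hm, kerEmbedding_aVec, kerRetraction_kerA]
    · simp [← bVec_of_lt hm, kerEmbedding_bVec, kerRetraction_kerB]
  exact LinearMap.congr_fun this w

theorem kerEmbedding_injective [CharP k 2] : Injective (kerEmbedding B) :=
  LeftInverse.injective kerRetraction_kerEmbedding

namespace IsVpos

variable [DistribMulAction K4 W] [SMulCommClass K4 k W] [CharP k 2] (hW : IsVpos k (n + 1) W B)
include hW

theorem kerEmbedding_sg_smul (w : W) :
    kerEmbedding B (sg • w) = regularTranslate k sg (kerEmbedding B w) := by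
  refine B.apply_smul_of_basis _ _ sg (fun s => ?_) w
  rcases s with ⟨m, hm⟩ | ⟨m, hm⟩
  · rw [← aVec_of_lt hm]
    cases m with
    | zero => rw [hW.sg_smul_aVec_zero, kerEmbedding_aVec, regularTranslate_sg_kerA_zero]
    | succ m =>
      rw [hW.sg_smul_aVec_succ, map_add, kerEmbedding_aVec, kerEmbedding_bVec,
        regularTranslate_sg_kerA_succ]
  · rw [← bVec_of_lt hm, hW.sg_smul_bVec, kerEmbedding_bVec, regularTranslate_kerB]

theorem kerEmbedding_tg_smul (w : W) :
    kerEmbedding B (tg • w) = regularTranslate k tg (kerEmbedding B w) := by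
  refine B.apply_smul_of_basis _ _ tg (fun s => ?_) w
  rcases s with ⟨m, hm⟩ | ⟨m, hm⟩
  · rw [← aVec_of_lt hm, hW.tg_smul_aVec, map_add, kerEmbedding_aVec, kerEmbedding_bVec,
      regularTranslate_tg_kerA]
  · rw [← bVec_of_lt hm, hW.tg_smul_bVec, kerEmbedding_bVec, regularTranslate_kerB]

theorem kerEmbedding_smul (g : K4) (w : W) :
    kerEmbedding B (g • w) = regularTranslate k g (kerEmbedding B w) := by
  rcases K4_eq_cases g with rfl | rfl | rfl | rfl
  · ext
    simp [regularTranslate]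
  · exact hW.kerEmbedding_sg_smul w
  · exact hW.kerEmbedding_tg_smul w
  · rw [mul_smul, regularTranslate_mul, hW.kerEmbedding_sg_smul, hW.kerEmbedding_tg_smul]

end IsVpos

end Embedding

theorem IsVpos.freeCover_comp_kerEmbedding {k : Type} [Field k] [CharP k 2] {n : ℕ}
    {V W : Type} [AddCommGroup V] [Module k V] [DistribMulAction K4 V] [AddCommGroup W]
    [Module k W] {BV : Module.Basis (Fin (n + 1) ⊕ Fin n) k V}
    {BW : Module.Basis (Fin (n + 2) ⊕ Fin (n + 1)) k W} (hV : IsVpos k n V BV) :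
    freeCover BV ∘ₗ kerEmbedding BW = 0 := by
  refine BW.ext fun s => ?_
  rcases s with ⟨m, hm⟩ | ⟨m, hm⟩
  · simpa [← aVec_of_lt hm, kerEmbedding_aVec] using hV.freeCover_kerA m
  · simpa [← bVec_of_lt hm, kerEmbedding_bVec] using hV.freeCover_kerB m

/-- For every `n ≥ 0` there is a surjective `kG`-homomorphism from the free module
`(kG)^{n+1}` onto `V_{2n+1}` whose kernel is isomorphic as a `kG`-module to `V_{2n+3}`
(= `V_{2(n+1)+1}`, realized by `W` via an injective equivariant map with range `ker π`).
The free module is realized as `Fin (n+1) → (K4 → k)` with the left regular action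
`(g • F) i x = F i (g⁻¹x)`. -/
theorem stmt16 (k : Type) [Field k] [CharP k 2] (n : ℕ)
    (V : Type) [AddCommGroup V] [Module k V] [DistribMulAction K4 V] [SMulCommClass K4 k V]
    (BV : Module.Basis (Fin (n + 1) ⊕ Fin n) k V) (hV : IsVpos k n V BV)
    (W : Type) [AddCommGroup W] [Module k W] [DistribMulAction K4 W] [SMulCommClass K4 k W]
    (BW : Module.Basis (Fin (n + 2) ⊕ Fin (n + 1)) k W) (hW : IsVpos k (n + 1) W BW) :
    ∃ π : (Fin (n + 1) → K4 → k) →ₗ[k] V,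
      Function.Surjective π ∧
      (∀ (g : K4) (F : Fin (n + 1) → K4 → k),
        π (fun i x => F i (g⁻¹ * x)) = g • π F) ∧
      ∃ ι : W →ₗ[k] (Fin (n + 1) → K4 → k),
        Function.Injective ι ∧
        (∀ (g : K4) (w : W), ι (g • w) = fun i x => ι w i (g⁻¹ * x)) ∧
        LinearMap.range ι = LinearMap.ker π := by
  refine ⟨freeCover BV, hV.freeCover_surjective, freeLift_translate k _, kerEmbedding BW,
    kerEmbedding_injective, hW.kerEmbedding_smul, ?_⟩
  refine LinearMap.range_eq_ker_of_finrank_add_eq kerEmbedding_injective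
    hV.freeCover_surjective hV.freeCover_comp_kerEmbedding ?_
  simp [Module.finrank_eq_card_basis BW, Module.finrank_eq_card_basis BV,
    Module.finrank_pi_fintype]
  omega
end

section
/- Let m ≥ 1. Then the G-fixed points of V_{2m+1} are the k-linear span of b₁,…,bₘ, and the sum over i = 1, 2, 3 of the images of the relative trace maps Tr^G_{Hᵢ} : (V_{2m+1})^{Hᵢ} → (V_{2m+1})^G equals the k-linear span of the three elements b₁, bₘ, and b₁+⋯+bₘ. -/
/-- The relative trace map `Tr^G_H : M^H → M^G`, `Tr^G_H(x) = Σ_{g ∈ S} g • x`, where the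
sum runs over the set `S` of representatives (`Quotient.out`) of the left cosets of `H`
in `G` (a left transversal). -/
noncomputable def relTr (H : Subgroup K4) {V : Type} [AddCommMonoid V] [SMul K4 V]
    (v : V) : V :=
  ∑ᶠ c : K4 ⧸ H, Quotient.out c • v

/-
For an index-two subgroup `H` and `g ∉ H`, the relative trace of an `H`-fixed vector `v` is
`v + g • v`, which in characteristic two is `(g - 1) • v`. Writing `σ = 1 + X`, `τ = 1 + Y`,
the operators `X` and `Y` copy the coefficients of `a₁, …, aₘ`, resp. `a₀, …, aₘ₋₁`, onto
`b₁, …, bₘ`. Hence the `G`-fixed vectors are those without `a`-components; a `σ`-fixed vector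
has no `a`-component besides `a₀`, so `Tr_{H₁}` lands in `k b₁`; symmetrically `Tr_{H₂}` lands in
`k bₘ`; and a `στ`-fixed vector has `Xv = Yv`, which forces all its `a`-coefficients to be
equal, so `Tr_{H₃}` lands in `k (b₁ + ⋯ + bₘ)`. The three generators are attained at `a₀`,
`aₘ` and `a₀ + ⋯ + aₘ`.
-/

open Subgroup

lemma K4_cases : ∀ x : K4, x = 1 ∨ x = sg ∨ x = tg ∨ x = sg * tg := by decide

lemma orderOf_K4 {x : K4} (hx : x ≠ 1) : orderOf x = 2 :=
  orderOf_eq_prime (by revert x; decide) hx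

lemma mem_zpowers_K4_iff {x : K4} (hx : x ≠ 1) {y : K4} : y ∈ zpowers x ↔ y = 1 ∨ y = x := by
  rw [mem_zpowers_iff_mem_range_orderOf, orderOf_K4 hx]
  simp [Nat.le_one_iff_eq_zero_or_eq_one, or_and_right, exists_or, eq_comm]

lemma index_zpowers_K4 {x : K4} (hx : x ≠ 1) : (zpowers x).index = 2 := by
  have h := (zpowers x).index_mul_card
  rw [Nat.card_zpowers, orderOf_K4 hx, Nat.card_eq_fintype_card] at h
  have : Fintype.card K4 = 4 := rfl
  omega

lemma forall_smul_eq_self_iff_K4 {α : Type*} [MulAction K4 α] {a : α} :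
    (∀ g : K4, g • a = a) ↔ sg • a = a ∧ tg • a = a := by
  refine ⟨fun h => ⟨h sg, h tg⟩, fun ⟨hs, ht⟩ g => ?_⟩
  rcases K4_cases g with rfl | rfl | rfl | rfl <;> simp [mul_smul, hs, ht]

lemma sg_mul_tg_smul_eq_self_iff {α : Type*} [MulAction K4 α] {a : α} :
    (sg * tg) • a = a ↔ tg • a = sg • a := by
  rw [mul_smul, smul_eq_iff_eq_inv_smul, show sg⁻¹ = sg by decide]

lemma forall_mem_zpowers_smul_eq_self_iff {G α : Type*} [Group G] [MulAction G α] {x : G}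
    {a : α} : (∀ h ∈ zpowers x, h • a = a) ↔ x • a = a := by
  simpa only [SetLike.le_def, MulAction.mem_stabilizer_iff] using
    zpowers_le (H := MulAction.stabilizer G a)

lemma relTr_eq_add_smul {H : Subgroup K4} (hH : H.index = 2) {g : K4} (hg : g ∉ H)
    {V : Type} [AddCommMonoid V] [MulAction K4 V] {v : V} (hv : ∀ h ∈ H, h • v = v) :
    relTr H v = v + g • v := by
  have out_smul (x : K4) : (x : K4 ⧸ H).out • v = x • v := by
    obtain ⟨h, hh⟩ := QuotientGroup.mk_out_eq_mul H x
    rw [hh, mul_smul, hv h h.2]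
  have hne : ((1 : K4) : K4 ⧸ H) ≠ g := by
    rwa [Ne, QuotientGroup.eq, inv_one, one_mul]
  have huniv : (Set.univ : Set (K4 ⧸ H)) = {((1 : K4) : K4 ⧸ H), (g : K4 ⧸ H)} := by
    ext c
    induction c using QuotientGroup.induction_on with | H x => ?_
    simp only [Set.mem_univ, Set.mem_insert_iff, Set.mem_singleton_iff, QuotientGroup.eq,
      true_iff, mul_mem_iff_of_index_two hH, inv_mem_iff, H.one_mem, iff_true, hg, iff_false]
    exact em _
  rw [relTr, ← finsum_mem_univ, huniv, finsum_mem_pair hne, out_smul, out_smul, one_smul]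

lemma relTr_H1_eq_add_tg_smul {V : Type} [AddCommMonoid V] [MulAction K4 V] {v : V}
    (hv : ∀ h ∈ H1, h • v = v) : relTr H1 v = v + tg • v :=
  relTr_eq_add_smul (H := H1) (index_zpowers_K4 (by decide))
    (by rw [H1, mem_zpowers_K4_iff (by decide)]; decide) hv

lemma relTr_H2_eq_add_sg_smul {V : Type} [AddCommMonoid V] [MulAction K4 V] {v : V}
    (hv : ∀ h ∈ H2, h • v = v) : relTr H2 v = v + sg • v :=
  relTr_eq_add_smul (H := H2) (index_zpowers_K4 (by decide))
    (by rw [H2, mem_zpowers_K4_iff (by decide)]; decide) hv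

lemma relTr_H3_eq_add_sg_smul {V : Type} [AddCommMonoid V] [MulAction K4 V] {v : V}
    (hv : ∀ h ∈ H3, h • v = v) : relTr H3 v = v + sg • v :=
  relTr_eq_add_smul (H := H3) (index_zpowers_K4 (by decide))
    (by rw [H3, mem_zpowers_K4_iff (by decide)]; decide) hv

lemma add_add_cancel_left_of_charTwo (k : Type*) {V : Type*} [Ring k] [CharP k 2]
    [AddCommGroup V] [Module k V] (v w : V) : v + (v + w) = w := by
  rw [← add_assoc, ← two_smul k v, CharTwo.two_eq_zero, zero_smul, zero_add]

lemma Fin.apply_eq_apply_zero_of_castSucc_eq_succ {α : Type*} {n : ℕ} {f : Fin (n + 1) → α}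
    (h : ∀ i : Fin n, f i.castSucc = f i.succ) (j : Fin (n + 1)) : f j = f 0 := by
  induction j using Fin.induction with
  | zero => rfl
  | succ i ih => rw [← h, ih]

namespace Module.Basis

variable {ι κ R M : Type*} [Semiring R] [AddCommMonoid M] [Module R M] (b : Basis (ι ⊕ κ) R M)

lemma mem_span_range_inr_iff {v : M} :
    v ∈ Submodule.span R (Set.range fun j => b (Sum.inr j)) ↔ ∀ i, b.repr v (Sum.inl i) = 0 := by
  rw [Set.range_comp' b Sum.inr, b.mem_span_image]
  refine ⟨fun h i => by_contra fun hi => ?_, fun h x hx => ?_⟩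
  · obtain ⟨j, hj⟩ := h (Finsupp.mem_support_iff.mpr hi)
    exact Sum.inr_ne_inl hj
  · rcases x with i | j
    · exact absurd (h i) (Finsupp.mem_support_iff.mp hx)
    · exact ⟨j, rfl⟩

lemma linearIndependent_inr : LinearIndependent R fun j => b (Sum.inr j) :=
  b.linearIndependent.comp Sum.inr Sum.inr_injective

end Module.Basis

namespace IsVpos

variable {k : Type} [Field k] {m : ℕ} {V : Type} [AddCommGroup V] [Module k V]
  [DistribMulAction K4 V] [SMulCommClass K4 k V] {B : Module.Basis (Fin (m + 1) ⊕ Fin m) k V}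

lemma sg_smul (hV : IsVpos k m V B) (v : V) :
    sg • v = v + ∑ i : Fin m, B.repr v (Sum.inl i.succ) • B (Sum.inr i) := by
  have h : DistribSMul.toLinearMap k V sg =
      LinearMap.id + ∑ i : Fin m, (B.coord (Sum.inl i.succ)).smulRight (B (Sum.inr i)) := by
    refine B.ext fun x => ?_
    rcases x with j | j
    · refine Fin.cases ?_ (fun i => ?_) j
      · simp [hV.1]
      · simp [hV.2.1 i, Finsupp.single_apply]
    · simp [hV.2.2.2.2.1 j]
  simpa using congr($h v)

lemma tg_smul (hV : IsVpos k m V B) (v : V) :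
    tg • v = v + ∑ i : Fin m, B.repr v (Sum.inl i.castSucc) • B (Sum.inr i) := by
  have h : DistribSMul.toLinearMap k V tg =
      LinearMap.id + ∑ i : Fin m, (B.coord (Sum.inl i.castSucc)).smulRight (B (Sum.inr i)) := by
    refine B.ext fun x => ?_
    rcases x with j | j
    · refine Fin.lastCases ?_ (fun i => ?_) j
      · simp [hV.2.2.2.1]
      · simp [hV.2.2.1 i, Finsupp.single_apply]
    · simp [hV.2.2.2.2.2 j]
  simpa using congr($h v)

lemma sg_smul_eq_self_iff (hV : IsVpos k m V B) {v : V} :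
    sg • v = v ↔ ∀ i : Fin m, B.repr v (Sum.inl i.succ) = 0 := by
  rw [hV.sg_smul, add_eq_left]
  exact ⟨Fintype.linearIndependent_iff.mp B.linearIndependent_inr _, fun h => by simp [h]⟩

lemma tg_smul_eq_self_iff (hV : IsVpos k m V B) {v : V} :
    tg • v = v ↔ ∀ i : Fin m, B.repr v (Sum.inl i.castSucc) = 0 := by
  rw [hV.tg_smul, add_eq_left]
  exact ⟨Fintype.linearIndependent_iff.mp B.linearIndependent_inr _, fun h => by simp [h]⟩

lemma forall_smul_eq_self_iff (hV : IsVpos k m V B) (hm : 1 ≤ m) {v : V} :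
    (∀ g : K4, g • v = v) ↔ ∀ j, B.repr v (Sum.inl j) = 0 := by
  rw [forall_smul_eq_self_iff_K4, hV.sg_smul_eq_self_iff, hV.tg_smul_eq_self_iff]
  refine ⟨fun ⟨hs, ht⟩ j => ?_, fun h => ⟨fun i => h _, fun i => h _⟩⟩
  induction j using Fin.cases with
  | zero => exact ht ⟨0, hm⟩
  | succ i => exact hs i

variable [CharP k 2]

lemma relTr_H1_eq (hV : IsVpos k m V B) (hm : 1 ≤ m) {v : V} (hv : ∀ h ∈ H1, h • v = v) :
    relTr H1 v = B.repr v (Sum.inl 0) • B (Sum.inr ⟨0, hm⟩) := by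
  have hsucc := hV.sg_smul_eq_self_iff.mp (hv sg (mem_zpowers sg))
  rw [relTr_H1_eq_add_tg_smul hv, hV.tg_smul, add_add_cancel_left_of_charTwo k,
    show (0 : Fin (m + 1)) = (⟨0, hm⟩ : Fin m).castSucc from rfl]
  refine Finset.sum_eq_single_of_mem _ (Finset.mem_univ _) fun i _ hi => ?_
  obtain ⟨j, hj⟩ := Fin.exists_succ_eq.mpr (by simpa [Fin.ext_iff] using hi : i.castSucc ≠ 0)
  rw [← hj, hsucc, zero_smul]

lemma relTr_H2_eq (hV : IsVpos k m V B) (hm : 1 ≤ m) {v : V} (hv : ∀ h ∈ H2, h • v = v) :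
    relTr H2 v =
      B.repr v (Sum.inl (Fin.last m)) • B (Sum.inr ⟨m - 1, Nat.sub_lt hm Nat.one_pos⟩) := by
  have hcast := hV.tg_smul_eq_self_iff.mp (hv tg (mem_zpowers tg))
  have hlast : (⟨m - 1, Nat.sub_lt hm Nat.one_pos⟩ : Fin m).succ = Fin.last m := by
    ext; simp; omega
  rw [relTr_H2_eq_add_sg_smul hv, hV.sg_smul, add_add_cancel_left_of_charTwo k, ← hlast]
  refine Finset.sum_eq_single_of_mem _ (Finset.mem_univ _) fun i _ hi => ?_
  obtain ⟨j, hj⟩ := Fin.exists_castSucc_eq.mpr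
    (by simp [Fin.ext_iff] at hi ⊢; omega : i.succ ≠ Fin.last m)
  rw [← hj, hcast, zero_smul]

lemma relTr_H3_eq (hV : IsVpos k m V B) {v : V} (hv : ∀ h ∈ H3, h • v = v) :
    relTr H3 v = B.repr v (Sum.inl 0) • ∑ j : Fin m, B (Sum.inr j) := by
  have hts := sg_mul_tg_smul_eq_self_iff.mp (hv _ (mem_zpowers _))
  rw [hV.sg_smul, hV.tg_smul, add_right_inj] at hts
  have hconst := Fin.apply_eq_apply_zero_of_castSucc_eq_succ (f := fun j => B.repr v (Sum.inl j))
    (Fintype.linearIndependent_iffₛ.mp B.linearIndependent_inr _ _ hts)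
  rw [relTr_H3_eq_add_sg_smul hv, hV.sg_smul, add_add_cancel_left_of_charTwo k, Finset.smul_sum]
  simp only [hconst]

lemma basis_inr_zero_mem_image_relTr_H1 (hV : IsVpos k m V B) (hm : 1 ≤ m) :
    B (Sum.inr ⟨0, hm⟩) ∈ relTr H1 '' {v : V | ∀ h ∈ H1, h • v = v} := by
  have hfix : ∀ h ∈ H1, h • B (Sum.inl 0) = B (Sum.inl 0) :=
    forall_mem_zpowers_smul_eq_self_iff.mpr hV.1
  refine ⟨_, hfix, ?_⟩
  rw [hV.relTr_H1_eq hm hfix, B.repr_self, Finsupp.single_eq_same, one_smul]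

lemma basis_inr_last_mem_image_relTr_H2 (hV : IsVpos k m V B) (hm : 1 ≤ m) :
    B (Sum.inr ⟨m - 1, Nat.sub_lt hm Nat.one_pos⟩) ∈
      relTr H2 '' {v : V | ∀ h ∈ H2, h • v = v} := by
  have hfix : ∀ h ∈ H2, h • B (Sum.inl (Fin.last m)) = B (Sum.inl (Fin.last m)) :=
    forall_mem_zpowers_smul_eq_self_iff.mpr hV.2.2.2.1
  refine ⟨_, hfix, ?_⟩
  rw [hV.relTr_H2_eq hm hfix, B.repr_self, Finsupp.single_eq_same, one_smul]

lemma sum_basis_inr_mem_image_relTr_H3 (hV : IsVpos k m V B) :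
    ∑ j : Fin m, B (Sum.inr j) ∈ relTr H3 '' {v : V | ∀ h ∈ H3, h • v = v} := by
  have hrepr (i : Fin (m + 1)) : B.repr (∑ j, B (Sum.inl j)) (Sum.inl i) = 1 := by
    simp [Finsupp.single_apply]
  have hfix : ∀ h ∈ H3, h • ∑ j, B (Sum.inl j) = ∑ j, B (Sum.inl j) := by
    rw [H3, forall_mem_zpowers_smul_eq_self_iff, sg_mul_tg_smul_eq_self_iff, hV.sg_smul,
      hV.tg_smul]
    simp only [hrepr]
  refine ⟨_, hfix, ?_⟩
  rw [hV.relTr_H3_eq hfix, hrepr, one_smul]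

end IsVpos

/-- Let `m ≥ 1`. The `G`-fixed points of `V_{2m+1}` are the span of `b₁, …, bₘ`, and the
sum over `i = 1, 2, 3` of the images of the relative trace maps
`Tr^G_{Hᵢ} : (V_{2m+1})^{Hᵢ} → (V_{2m+1})^G` equals the span of `b₁`, `bₘ` and
`b₁ + ⋯ + bₘ`. -/
theorem stmt19 (k : Type) [Field k] [CharP k 2] (m : ℕ) (hm : 1 ≤ m)
    (V : Type) [AddCommGroup V] [Module k V] [DistribMulAction K4 V] [SMulCommClass K4 k V]
    (B : Module.Basis (Fin (m + 1) ⊕ Fin m) k V) (hV : IsVpos k m V B) :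
    {v : V | ∀ g : K4, g • v = v} =
      ↑(Submodule.span k (Set.range fun j : Fin m => B (Sum.inr j))) ∧
    Submodule.span k
      ((fun v : V => relTr H1 v) '' {v : V | ∀ h ∈ H1, h • v = v} ∪
        (fun v : V => relTr H2 v) '' {v : V | ∀ h ∈ H2, h • v = v} ∪
        (fun v : V => relTr H3 v) '' {v : V | ∀ h ∈ H3, h • v = v}) =
      Submodule.span k {B (Sum.inr ⟨0, hm⟩), B (Sum.inr ⟨m - 1, by omega⟩),
        ∑ j : Fin m, B (Sum.inr j)} := by
  refine ⟨Set.ext fun v => (hV.forall_smul_eq_self_iff hm).trans B.mem_span_range_inr_iff.symm,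
    le_antisymm ?_ ?_⟩
  · rw [Submodule.span_le]
    rintro _ ((⟨v, hv, rfl⟩ | ⟨v, hv, rfl⟩) | ⟨v, hv, rfl⟩) <;> dsimp only
    · rw [hV.relTr_H1_eq hm hv]
      exact Submodule.smul_mem _ _ (Submodule.subset_span (by simp))
    · rw [hV.relTr_H2_eq hm hv]
      exact Submodule.smul_mem _ _ (Submodule.subset_span (by simp))
    · rw [hV.relTr_H3_eq hv]
      exact Submodule.smul_mem _ _ (Submodule.subset_span (by simp))
  · rw [Submodule.span_le, Set.insert_subset_iff, Set.insert_subset_iff, Set.singleton_subset_iff]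
    exact ⟨Submodule.subset_span (Or.inl (Or.inl (hV.basis_inr_zero_mem_image_relTr_H1 hm))),
      Submodule.subset_span (Or.inl (Or.inr (hV.basis_inr_last_mem_image_relTr_H2 hm))),
      Submodule.subset_span (Or.inr hV.sum_basis_inr_mem_image_relTr_H3)⟩
end
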